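/- Let (a_n)_{n≥1} be any sequence in the open unit disk, with Blaschke products (B_n) and MT functions (φ_n). Then for every n ≥ 1 and all real x, y with e^{ix} ≠ e^{iy}, the Christoffel–Darboux identity holds: ∑_{j=0}^{n−1} φ_j(e^{ix})·conj(φ_j(e^{iy})) = (B_n(e^{ix})·conj(B_n(e^{iy})) − 1)/(e^{i(x−y)} − 1). Consequently, for every f ∈ L²(𝕋) and every real x, ∑_{j=0}^{n−1} ⟨f, φ_j⟩·φ_j(e^{ix}) = (1/2π)∫_{−π}^{π} f(e^{iy})·(B_n(e^{ix})·conj(B_n(e^{iy})) − 1)/(e^{i(x−y)} − 1) dy, the integrand being a bounded measurable function of y. -/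

import Mathlib

/-!
A Blaschke factor satisfies
`(1 - b_a(z) conj b_a(w)) (1 - conj a z) (1 - a conj w) = (1 - |a|²) (1 - z conj w)`,
so `φ_j(z) conj φ_j(w) (1 - z conj w) = B_j(z) conj B_j(w) - B_{j+1}(z) conj B_{j+1}(w)`, and the
sum over `j < n` telescopes to `1 - B_n(z) conj B_n(w)` for `z, w` in the closed disk. On the circle
`z conj w = e^{i(x-y)}`. The kernel formula follows by exchanging the finite sum with the integral:
the identity holds off the null set of `y` with `e^{iy} = e^{ix}`.
-/

open MeasureTheory Real Set Filter

noncomputable section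

/-- Möbius/Blaschke factor, with the convention that the factor is `z` when `a = 0`. -/
def blaschkeFactor (a z : ℂ) : ℂ :=
  if a = 0 then z
  else (starRingEnd ℂ a / ‖a‖) * ((z - a) / (1 - starRingEnd ℂ a * z))

/-- Blaschke product `B_n(z) = ∏_{j=1}^n` of the factors of the sequence `a`. -/
def blaschkeProd (a : ℕ → ℂ) (n : ℕ) (z : ℂ) : ℂ :=
  ∏ j ∈ Finset.Icc 1 n, blaschkeFactor (a j) z

/-- Malmquist–Takenaka function `φ_n`. -/
def mtFun (a : ℕ → ℂ) (n : ℕ) (z : ℂ) : ℂ :=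
  blaschkeProd a n z *
    ((Real.sqrt (1 - ‖a (n + 1)‖ ^ 2) : ℂ) / (1 - starRingEnd ℂ (a (n + 1)) * z))

/-- Inner product `(1/2π)∫_{-π}^{π} f(θ) conj (g(θ)) dθ` on the circle. -/
def circInner (f g : ℝ → ℂ) : ℂ :=
  (1 / (2 * Real.pi)) * ∫ θ in (-Real.pi)..Real.pi, f θ * starRingEnd ℂ (g θ)

/-- MT coefficient `⟨f, φ_j⟩`. -/
def mtCoeff (a : ℕ → ℂ) (f : ℝ → ℂ) (j : ℕ) : ℂ :=
  circInner f (fun θ => mtFun a j (Complex.exp (θ * Complex.I)))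

/-- Partial sum `∑_{j=0}^{n} ⟨f, φ_j⟩ φ_j(e^{ix})` of the MT series. -/
def mtPartial (a : ℕ → ℂ) (f : ℝ → ℂ) (n : ℕ) (x : ℝ) : ℂ :=
  ∑ j ∈ Finset.range (n + 1), mtCoeff a f j * mtFun a j (Complex.exp (x * Complex.I))

open ComplexConjugate

lemma one_sub_conj_mul_ne_zero {a z : ℂ} (ha : ‖a‖ < 1) (hz : ‖z‖ ≤ 1) :
    1 - conj a * z ≠ 0 := by
  have : ‖conj a * z‖ < 1 := by
    rw [norm_mul, Complex.norm_conj]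
    exact mul_lt_one_of_nonneg_of_lt_one_left (norm_nonneg a) ha hz
  intro h
  rw [← sub_eq_zero.mp h, norm_one] at this
  exact lt_irrefl _ this

lemma one_sub_blaschkeFactor_mul_conj {a z w : ℂ} (hz : 1 - conj a * z ≠ 0)
    (hw : 1 - conj a * w ≠ 0) :
    (1 - blaschkeFactor a z * conj (blaschkeFactor a w)) *
        ((1 - conj a * z) * conj (1 - conj a * w))
      = (1 - ‖a‖ ^ 2) * (1 - z * conj w) := by
  by_cases h : a = 0
  · simp [h, blaschkeFactor]
  have hw' : conj (1 - conj a * w) ≠ 0 := (map_ne_zero _).2 hw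
  have hnorm : (‖a‖ : ℂ) ≠ 0 := by exact_mod_cast norm_ne_zero_iff.2 h
  have hsq : (‖a‖ : ℂ) ^ 2 = a * conj a := by
    rw [Complex.mul_conj, Complex.normSq_eq_norm_sq]
    push_cast
    ring
  simp only [blaschkeFactor, if_neg h, map_mul, map_div₀, map_sub, map_one, Complex.conj_conj,
    Complex.conj_ofReal] at hw' ⊢
  field_simp
  rw [hsq]
  ring

lemma blaschkeProd_zero (a : ℕ → ℂ) (z : ℂ) : blaschkeProd a 0 z = 1 := by
  simp [blaschkeProd]

lemma blaschkeProd_succ (a : ℕ → ℂ) (n : ℕ) (z : ℂ) :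
    blaschkeProd a (n + 1) z = blaschkeProd a n z * blaschkeFactor (a (n + 1)) z :=
  Finset.prod_Icc_succ_top (Nat.le_add_left 1 n) _

lemma mtFun_mul_conj_mul_one_sub {a : ℕ → ℂ} {j : ℕ} {z w : ℂ} (ha : ‖a (j + 1)‖ < 1)
    (hz : ‖z‖ ≤ 1) (hw : ‖w‖ ≤ 1) :
    mtFun a j z * conj (mtFun a j w) * (1 - z * conj w)
      = blaschkeProd a j z * conj (blaschkeProd a j w)
        - blaschkeProd a (j + 1) z * conj (blaschkeProd a (j + 1) w) := by
  have hz' := one_sub_conj_mul_ne_zero ha hz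
  have hw' := (map_ne_zero conj).2 (one_sub_conj_mul_ne_zero ha hw)
  have hsqrt : ((√(1 - ‖a (j + 1)‖ ^ 2) : ℝ) : ℂ) ^ 2 = 1 - ‖a (j + 1)‖ ^ 2 := by
    norm_cast
    exact Real.sq_sqrt (by nlinarith [norm_nonneg (a (j + 1))])
  have key := one_sub_blaschkeFactor_mul_conj hz' (one_sub_conj_mul_ne_zero ha hw)
  rw [blaschkeProd_succ, blaschkeProd_succ]
  simp only [mtFun, map_mul, map_div₀, Complex.conj_ofReal]
  field_simp
  linear_combination
    (-(blaschkeProd a j z * conj (blaschkeProd a j w))) * key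
      + (blaschkeProd a j z * conj (blaschkeProd a j w) * (1 - z * conj w)) * hsqrt

theorem sum_mtFun_mul_conj_mul_one_sub {a : ℕ → ℂ} {n : ℕ}
    (ha : ∀ k ∈ Finset.Icc 1 n, ‖a k‖ < 1) {z w : ℂ} (hz : ‖z‖ ≤ 1) (hw : ‖w‖ ≤ 1) :
    (∑ j ∈ Finset.range n, mtFun a j z * conj (mtFun a j w)) * (1 - z * conj w)
      = 1 - blaschkeProd a n z * conj (blaschkeProd a n w) := by
  have hstep (j) (hj : j ∈ Finset.range n) :=
    mtFun_mul_conj_mul_one_sub (ha (j + 1) (by simp at hj ⊢; omega)) hz hw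
  rw [Finset.sum_mul, Finset.sum_congr rfl hstep,
    Finset.sum_range_sub' (fun j => blaschkeProd a j z * conj (blaschkeProd a j w))]
  simp [blaschkeProd_zero]

lemma exp_mul_I_mul_conj_exp_mul_I (x y : ℝ) :
    Complex.exp (x * Complex.I) * conj (Complex.exp (y * Complex.I))
      = Complex.exp (((x - y : ℝ) : ℂ) * Complex.I) := by
  rw [← Complex.exp_conj, ← Complex.exp_add, map_mul, Complex.conj_ofReal, Complex.conj_I]
  push_cast
  ring_nf

lemma exp_sub_mul_I_ne_one {x y : ℝ}
    (hxy : Complex.exp (x * Complex.I) ≠ Complex.exp (y * Complex.I)) :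
    Complex.exp (((x - y : ℝ) : ℂ) * Complex.I) ≠ 1 := by
  intro h
  apply hxy
  rw [← mul_one (Complex.exp (y * Complex.I)), ← h, ← Complex.exp_add]
  push_cast
  ring_nf

lemma ae_exp_mul_I_ne (x : ℝ) :
    ∀ᵐ y : ℝ, Complex.exp (y * Complex.I) ≠ Complex.exp (x * Complex.I) := by
  have hcount :
      {y : ℝ | Complex.exp (y * Complex.I) = Complex.exp (x * Complex.I)}.Countable := by
    refine (Set.countable_range fun k : ℤ => x + k * (2 * π)).mono fun y hy => ?_
    obtain ⟨k, hk⟩ := Complex.exp_eq_exp_iff_exists_int.1 hy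
    refine ⟨k, ?_⟩
    apply_fun fun w => (w * Complex.I⁻¹).re at hk
    simp only [mul_inv_cancel_right₀ Complex.I_ne_zero, add_mul, Complex.ofReal_re] at hk
    simpa [mul_assoc, mul_comm] using hk.symm
  exact measure_eq_zero_iff_ae_notMem.1 (hcount.measure_zero _)

theorem christoffel_darboux_circle {a : ℕ → ℂ} {n : ℕ} (ha : ∀ k ∈ Finset.Icc 1 n, ‖a k‖ < 1)
    {x y : ℝ} (hxy : Complex.exp (x * Complex.I) ≠ Complex.exp (y * Complex.I)) :
    ∑ j ∈ Finset.range n,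
        mtFun a j (Complex.exp (x * Complex.I)) * conj (mtFun a j (Complex.exp (y * Complex.I)))
      = (blaschkeProd a n (Complex.exp (x * Complex.I)) *
          conj (blaschkeProd a n (Complex.exp (y * Complex.I))) - 1) /
          (Complex.exp (((x - y : ℝ) : ℂ) * Complex.I) - 1) := by
  have hcd := sum_mtFun_mul_conj_mul_one_sub ha
    (Complex.norm_exp_ofReal_mul_I x).le (Complex.norm_exp_ofReal_mul_I y).le
  rw [exp_mul_I_mul_conj_exp_mul_I] at hcd
  rw [eq_div_iff (sub_ne_zero.2 (exp_sub_mul_I_ne_one hxy))]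
  linear_combination -hcd

lemma continuousOn_blaschkeFactor {a : ℂ} (ha : ‖a‖ < 1) :
    ContinuousOn (blaschkeFactor a) (Metric.closedBall 0 1) := by
  unfold blaschkeFactor
  split_ifs
  · exact continuousOn_id
  · refine continuousOn_const.mul ((continuousOn_id.sub continuousOn_const).div
      (continuousOn_const.sub (continuousOn_const.mul continuousOn_id)) fun z hz => ?_)
    exact one_sub_conj_mul_ne_zero ha (by simpa using hz)

lemma continuousOn_mtFun {a : ℕ → ℂ} {n : ℕ} (ha : ∀ k ∈ Finset.Icc 1 (n + 1), ‖a k‖ < 1) :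
    ContinuousOn (mtFun a n) (Metric.closedBall 0 1) := by
  have hprod : ContinuousOn (blaschkeProd a n) (Metric.closedBall 0 1) :=
    continuousOn_finsetProd _ fun k hk =>
      continuousOn_blaschkeFactor (ha k (Finset.Icc_subset_Icc_right n.le_succ hk))
  have hlast := ha (n + 1) (by simp)
  refine hprod.mul (continuousOn_const.div
    (continuousOn_const.sub (continuousOn_const.mul continuousOn_id)) fun z hz => ?_)
  exact one_sub_conj_mul_ne_zero hlast (by simpa using hz)

lemma continuous_mtFun_exp_mul_I {a : ℕ → ℂ} {n : ℕ}
    (ha : ∀ k ∈ Finset.Icc 1 (n + 1), ‖a k‖ < 1) :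
    Continuous fun θ : ℝ => mtFun a n (Complex.exp (θ * Complex.I)) :=
  (continuousOn_mtFun ha).comp_continuous (by fun_prop) fun θ => by
    simp [Complex.norm_exp_ofReal_mul_I]

lemma sum_circInner_mul {ι : Type*} (s : Finset ι) {f : ℝ → ℂ}
    (hf : IntervalIntegrable f volume (-π) π) {g : ι → ℝ → ℂ} (hg : ∀ j ∈ s, Continuous (g j))
    (c : ι → ℂ) :
    ∑ j ∈ s, circInner f (g j) * c j
      = (1 / (2 * π) : ℂ) * ∫ y in (-π)..π, f y * ∑ j ∈ s, conj (g j y) * c j := by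
  have hint (j) (hj : j ∈ s) :
      IntervalIntegrable (fun y => f y * (conj (g j y) * c j)) volume (-π) π :=
    hf.mul_continuousOn
      ((Complex.continuous_conj.comp (hg j hj)).mul continuous_const).continuousOn
  simp only [Finset.mul_sum]
  rw [intervalIntegral.integral_finsetSum hint, Finset.mul_sum]
  refine Finset.sum_congr rfl fun j _ => ?_
  rw [circInner, mul_assoc, ← intervalIntegral.integral_mul_const]
  simp only [mul_assoc]

theorem mt_christoffel_darboux_general
    (a : ℕ → ℂ) (ha : ∀ n : ℕ, 1 ≤ n → ‖a n‖ < 1)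
    (n : ℕ) :
    (∀ x y : ℝ, Complex.exp ((x : ℂ) * Complex.I) ≠ Complex.exp ((y : ℂ) * Complex.I) →
      ∑ j ∈ Finset.range n,
          mtFun a j (Complex.exp ((x : ℂ) * Complex.I)) *
            starRingEnd ℂ (mtFun a j (Complex.exp ((y : ℂ) * Complex.I)))
        = (blaschkeProd a n (Complex.exp ((x : ℂ) * Complex.I)) *
            starRingEnd ℂ (blaschkeProd a n (Complex.exp ((y : ℂ) * Complex.I))) - 1) /
            (Complex.exp (((x - y : ℝ) : ℂ) * Complex.I) - 1)) ∧
    (∀ f : ℝ → ℂ, MemLp f 2 (volume.restrict (Set.Icc (-Real.pi) Real.pi)) →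
      ∀ x : ℝ,
        ∑ j ∈ Finset.range n, mtCoeff a f j * mtFun a j (Complex.exp ((x : ℂ) * Complex.I))
          = (1 / (2 * Real.pi) : ℂ) *
              ∫ y in (-Real.pi)..Real.pi,
                f y *
                  ((blaschkeProd a n (Complex.exp ((x : ℂ) * Complex.I)) *
                      starRingEnd ℂ (blaschkeProd a n (Complex.exp ((y : ℂ) * Complex.I))) - 1) /
                    (Complex.exp (((x - y : ℝ) : ℂ) * Complex.I) - 1))) := by
  have ha' (m : ℕ) : ∀ k ∈ Finset.Icc 1 m, ‖a k‖ < 1 := fun k hk =>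
    ha k (Finset.mem_Icc.1 hk).1
  refine ⟨fun x y hxy => christoffel_darboux_circle (ha' n) hxy, fun f hf x => ?_⟩
  have hfi : IntervalIntegrable f volume (-π) π :=
    (intervalIntegrable_iff_integrableOn_Icc_of_le (by linarith [pi_pos])).2
      (hf.integrable one_le_two)
  simp only [mtCoeff]
  rw [sum_circInner_mul _ hfi fun j _ => continuous_mtFun_exp_mul_I (ha' (j + 1))]
  congr 1
  refine intervalIntegral.integral_congr_ae ((ae_exp_mul_I_ne x).mono fun y hy _ => ?_)
  rw [← christoffel_darboux_circle (ha' n) (Ne.symm hy)]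
  simp only [mul_comm (starRingEnd ℂ _)]

/-- Christoffel–Darboux identity for the Malmquist–Takenaka system, and
the resulting kernel representation of the partial sum operator. -/
theorem mt_christoffel_darboux
    (a : ℕ → ℂ) (ha : ∀ n : ℕ, 1 ≤ n → ‖a n‖ < 1)
    (n : ℕ) (hn : 1 ≤ n) :
    (∀ x y : ℝ, Complex.exp ((x : ℂ) * Complex.I) ≠ Complex.exp ((y : ℂ) * Complex.I) →
      ∑ j ∈ Finset.range n,
          mtFun a j (Complex.exp ((x : ℂ) * Complex.I)) *
            starRingEnd ℂ (mtFun a j (Complex.exp ((y : ℂ) * Complex.I)))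
        = (blaschkeProd a n (Complex.exp ((x : ℂ) * Complex.I)) *
            starRingEnd ℂ (blaschkeProd a n (Complex.exp ((y : ℂ) * Complex.I))) - 1) /
            (Complex.exp (((x - y : ℝ) : ℂ) * Complex.I) - 1)) ∧
    (∀ f : ℝ → ℂ, MemLp f 2 (volume.restrict (Set.Icc (-Real.pi) Real.pi)) →
      ∀ x : ℝ,
        ∑ j ∈ Finset.range n, mtCoeff a f j * mtFun a j (Complex.exp ((x : ℂ) * Complex.I))
          = (1 / (2 * Real.pi) : ℂ) *
              ∫ y in (-Real.pi)..Real.pi,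
                f y *
                  ((blaschkeProd a n (Complex.exp ((x : ℂ) * Complex.I)) *
                      starRingEnd ℂ (blaschkeProd a n (Complex.exp ((y : ℂ) * Complex.I))) - 1) /
                    (Complex.exp (((x - y : ℝ) : ℂ) * Complex.I) - 1))) :=
  mt_christoffel_darboux_general a ha n
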